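/- arXiv:1204.3496 — 5 statements merged into one kernel-verified Lean document; each statement's English description precedes it below -/
import Mathlib

section
/- For all p ∈ [0,1] and y ∈ ℝ: |(e^y - 1)/(1 + p(e^y - 1))| ≤ |y|e^{|y|} and 0 ≤ y·(e^y - 1)/(1 + p(e^y - 1)) ≤ y² e^{|y|}. -/
/-- Bounds on `γ_p(y) = (e^y-1)/(1+p(e^y-1))`:
`|γ_p(y)| ≤ |y|e^{|y|}` and `0 ≤ y·γ_p(y) ≤ y²e^{|y|}`. -/
theorem gamma_bounds (p : ℝ) (hp : p ∈ Set.Icc (0:ℝ) 1) (y : ℝ) :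
    |(Real.exp y - 1) / (1 + p * (Real.exp y - 1))| ≤ |y| * Real.exp |y| ∧
    0 ≤ y * ((Real.exp y - 1) / (1 + p * (Real.exp y - 1))) ∧
    y * ((Real.exp y - 1) / (1 + p * (Real.exp y - 1))) ≤ y ^ 2 * Real.exp |y| := by
  obtain ⟨hp0, hp1⟩ := hp
  have hupos : 0 < Real.exp y := Real.exp_pos y
  have hDpos : 0 < 1 + p * (Real.exp y - 1) := by
    rcases le_or_gt 0 (Real.exp y - 1) with h | h
    · nlinarith
    · nlinarith
  have hinv : Real.exp (-y) * Real.exp y = 1 := by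
    rw [← Real.exp_add]; simp
  have habs : |(Real.exp y - 1) / (1 + p * (Real.exp y - 1))| ≤ |y| * Real.exp |y| := by
    rw [abs_div, abs_of_pos hDpos, div_le_iff₀ hDpos]
    rcases le_or_gt 0 y with hy | hy
    · rw [abs_of_nonneg hy, abs_of_nonneg (sub_nonneg.2 (Real.one_le_exp hy))]
      have h1 : 1 + (-y) ≤ Real.exp (-y) := by linarith [Real.add_one_le_exp (-y)]
      have h2 : 0 ≤ p * (Real.exp y - 1) :=
        mul_nonneg hp0 (sub_nonneg.2 (Real.one_le_exp hy))
      nlinarith [mul_nonneg hy hupos.le]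
    · rw [abs_of_neg hy, abs_of_neg (sub_neg.2 (Real.exp_lt_one_iff.2 hy))]
      have h1 : 1 + y ≤ Real.exp y := by linarith [Real.add_one_le_exp y]
      have hD : Real.exp y ≤ 1 + p * (Real.exp y - 1) := by
        nlinarith [mul_nonneg (sub_nonneg.2 hp1) (sub_nonneg.2 (Real.exp_lt_one_iff.2 hy).le)]
      have hpos : 0 < Real.exp (-y) := Real.exp_pos _
      nlinarith [mul_pos (neg_pos.2 hy) hpos]
  have hnn : 0 ≤ y * ((Real.exp y - 1) / (1 + p * (Real.exp y - 1))) := by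
    rcases le_or_gt 0 y with hy | hy
    · exact mul_nonneg hy (div_nonneg (sub_nonneg.2 (Real.one_le_exp hy)) hDpos.le)
    · have hd : (Real.exp y - 1) / (1 + p * (Real.exp y - 1)) ≤ 0 :=
        div_nonpos_of_nonpos_of_nonneg (sub_nonpos.2 (Real.exp_lt_one_iff.2 hy).le) hDpos.le
      nlinarith
  refine ⟨habs, hnn, ?_⟩
  calc y * ((Real.exp y - 1) / (1 + p * (Real.exp y - 1)))
      = |y * ((Real.exp y - 1) / (1 + p * (Real.exp y - 1)))| := (abs_of_nonneg hnn).symm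
    _ = |y| * |(Real.exp y - 1) / (1 + p * (Real.exp y - 1))| := abs_mul _ _
    _ ≤ |y| * (|y| * Real.exp |y|) := by
        exact mul_le_mul_of_nonneg_left habs (abs_nonneg y)
    _ = y ^ 2 * Real.exp |y| := by rw [← mul_assoc, ← sq_abs, sq]
end

section
/- Let u(θ) = θ' S_n - Σ_{i=1}^n [log(1+p_i(e^{θ'c_i}-1)) - θ'c_i p_i], i.e., u(θ) = log K_n^θ where K_n^θ = e^{θ'Σ c_i x_i}/∏(1+p_i(e^{θ'c_i}-1)) and S_n = Σ_{i=1}^n c_i(x_i - p_i). Then for any unit vector θ ∈ ℝ^d and any ε > 0, with L = max_{1≤i≤n} ‖c_i‖ and V_n = Σ_{i=1}^n c_i c_i' p_i(1-p_i), one has u(εθ) ≥ ε θ'S_n − (ε²/2) θ'V_n θ e^{εL}. -/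
open Real RealInnerProductSpace Finset

/-!
Each summand of `u` is bounded separately. Writing
`1 + p (e^y - 1) = e^{py} ((1 - p) e^{-py} + p e^{(1-p)y})` and bounding both exponentials by
`e^z ≤ 1 + z + (z²/2) e^{|z|}` gives `log (1 + p (e^y - 1)) ≤ p y + p (1 - p) (y²/2) e^{|y|}`;
for `y = ε θ'c_i` one has `|y| ≤ ε L`, and summing over `i` gives the bound.
-/

namespace Real

theorem one_sub_sq_div_two_le_one_add_mul_exp_neg {a : ℝ} (ha : 0 ≤ a) :
    1 - a ^ 2 / 2 ≤ (1 + a) * exp (-a) := by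
  have hderiv (t : ℝ) : HasDerivAt (fun t => (1 + t) * exp (-t) + t ^ 2 / 2)
      (t * (1 - exp (-t))) t := by
    refine ((((hasDerivAt_id' t).const_add 1).mul (hasDerivAt_neg t).exp).add
      ((hasDerivAt_pow 2 t).div_const 2)).congr_deriv ?_
    push_cast
    ring
  have hmono : MonotoneOn (fun t => (1 + t) * exp (-t) + t ^ 2 / 2) (Set.Ici 0) := by
    refine monotoneOn_of_deriv_nonneg (convex_Ici 0)
      (fun t _ => (hderiv t).continuousAt.continuousWithinAt)
      (fun t _ => (hderiv t).differentiableAt.differentiableWithinAt) fun t ht => ?_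
    rw [interior_Ici, Set.mem_Ioi] at ht
    rw [(hderiv t).deriv]
    exact mul_nonneg ht.le (sub_nonneg.2 (exp_le_one_iff.2 (by linarith)))
  have := hmono Set.self_mem_Ici (Set.mem_Ici.2 ha) ha
  simp only [neg_zero, exp_zero] at this
  linarith

theorem exp_sub_one_sub_le_exp_abs_sub_one_sub_abs (z : ℝ) :
    exp z - 1 - z ≤ exp |z| - 1 - |z| := by
  rcases le_total 0 z with hz | hz
  · rw [abs_of_nonneg hz]
  · have := self_le_sinh_iff.2 (neg_nonneg.2 hz)
    rw [sinh_eq, neg_neg] at this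
    rw [abs_of_nonpos hz]
    linarith

theorem exp_le_one_add_add_sq_div_two_mul_exp {z r : ℝ} (hz : |z| ≤ r) :
    exp z ≤ 1 + z + z ^ 2 / 2 * exp r := by
  have hpos := one_sub_sq_div_two_le_one_add_mul_exp_neg (abs_nonneg z)
  have habs : exp |z| - 1 - |z| ≤ |z| ^ 2 / 2 * exp |z| := by
    have h := mul_le_mul_of_nonneg_left hpos (exp_pos |z|).le
    rw [mul_left_comm, ← exp_add, add_neg_cancel, exp_zero] at h
    linarith
  calc exp z ≤ 1 + z + |z| ^ 2 / 2 * exp |z| := by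
        linarith [exp_sub_one_sub_le_exp_abs_sub_one_sub_abs z]
    _ ≤ 1 + z + z ^ 2 / 2 * exp r := by
        rw [sq_abs]; gcongr

theorem log_one_add_mul_exp_sub_one_le {p y r : ℝ} (hp₀ : 0 ≤ p) (hp₁ : p ≤ 1)
    (hy : |y| ≤ r) :
    log (1 + p * (exp y - 1)) ≤ p * y + p * (1 - p) * y ^ 2 / 2 * exp r := by
  have hfactor : 1 + p * (exp y - 1)
      = exp (p * y) * ((1 - p) * exp (-(p * y)) + p * exp ((1 - p) * y)) := by
    rw [mul_add, mul_left_comm, ← exp_add, mul_left_comm, ← exp_add]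
    ring_nf
    rw [exp_zero]
    ring
  have hle₁ : |-(p * y)| ≤ r := by
    rw [abs_neg, abs_mul, abs_of_nonneg hp₀]
    nlinarith [abs_nonneg y]
  have hle₂ : |(1 - p) * y| ≤ r := by
    rw [abs_mul, abs_of_nonneg (sub_nonneg.2 hp₁)]
    nlinarith [abs_nonneg y]
  -- the first-order terms cancel, and `p²(1-p) + p(1-p)² = p(1-p)`
  have hmix : (1 - p) * exp (-(p * y)) + p * exp ((1 - p) * y)
      ≤ 1 + p * (1 - p) * y ^ 2 / 2 * exp r := by
    have h₁ := mul_le_mul_of_nonneg_left (exp_le_one_add_add_sq_div_two_mul_exp hle₁)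
      (sub_nonneg.2 hp₁)
    have h₂ := mul_le_mul_of_nonneg_left (exp_le_one_add_add_sq_div_two_mul_exp hle₂) hp₀
    linear_combination h₁ + h₂
  have hpos : 0 < 1 + p * (exp y - 1) := by
    have := convexOn_exp.2 (Set.mem_univ 0) (Set.mem_univ y) (sub_nonneg.2 hp₁) hp₀ (by ring)
    simp only [smul_eq_mul, mul_zero, zero_add, exp_zero] at this
    linarith [exp_pos (p * y)]
  calc log (1 + p * (exp y - 1))
      ≤ log (exp (p * y) * exp (p * (1 - p) * y ^ 2 / 2 * exp r)) := by
        refine log_le_log hpos ?_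
        rw [hfactor]
        gcongr
        linarith [add_one_le_exp (p * (1 - p) * y ^ 2 / 2 * exp r)]
    _ = p * y + p * (1 - p) * y ^ 2 / 2 * exp r := by rw [← exp_add, log_exp]

end Real

theorem log_capital_lower_bound_general {d n : ℕ}
    (p x : Fin n → ℝ) (c : Fin n → EuclideanSpace ℝ (Fin d))
    (hp : ∀ i, p i ∈ Set.Ioo (0:ℝ) 1)
    (L : ℝ) (hL : IsGreatest (Set.range fun i => ‖c i‖) L)
    (u : EuclideanSpace ℝ (Fin d) → ℝ)
    (hu : ∀ ϑ, u ϑ = ⟪ϑ, ∑ i, x i • c i⟫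
        - ∑ i, Real.log (1 + p i * (Real.exp ⟪ϑ, c i⟫ - 1)))
    (S : EuclideanSpace ℝ (Fin d)) (hS : S = ∑ i, (x i - p i) • c i) :
    ∀ θ : EuclideanSpace ℝ (Fin d), ‖θ‖ = 1 → ∀ ε : ℝ, 0 < ε →
      u (ε • θ) ≥ ε * ⟪θ, S⟫
        - ε ^ 2 / 2 * (∑ i, p i * (1 - p i) * ⟪θ, c i⟫ ^ 2) * Real.exp (ε * L) := by
  intro θ hθ ε hε
  have hbound (i : Fin n) : |ε * ⟪θ, c i⟫| ≤ ε * L := by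
    rw [abs_mul, abs_of_pos hε]
    gcongr
    calc |⟪θ, c i⟫| ≤ ‖θ‖ * ‖c i‖ := abs_real_inner_le_norm θ (c i)
      _ ≤ L := by rw [hθ, one_mul]; exact hL.2 (Set.mem_range_self i)
  have hterm (i : Fin n) :=
    log_one_add_mul_exp_sub_one_le (hp i).1.le (hp i).2.le (hbound i)
  rw [hu, hS, ge_iff_le]
  simp only [inner_sum, real_inner_smul_left, real_inner_smul_right, Finset.mul_sum,
    Finset.sum_mul, ← Finset.sum_sub_distrib]
  refine Finset.sum_le_sum fun i _ => ?_
  linear_combination hterm i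

/-- Lower bound on the log-capital of the logistic strategy:
`u(εθ) ≥ ε θ'S_n − (ε²/2) θ'V_nθ e^{εL}` for unit vectors `θ`. -/
theorem log_capital_lower_bound {d n : ℕ} (hn : 0 < n)
    (p x : Fin n → ℝ) (c : Fin n → EuclideanSpace ℝ (Fin d))
    (hp : ∀ i, p i ∈ Set.Ioo (0:ℝ) 1)
    (hx : ∀ i, x i = 0 ∨ x i = 1)
    (L : ℝ) (hL : IsGreatest (Set.range fun i => ‖c i‖) L)
    (u : EuclideanSpace ℝ (Fin d) → ℝ)
    (hu : ∀ ϑ, u ϑ = ⟪ϑ, ∑ i, x i • c i⟫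
        - ∑ i, Real.log (1 + p i * (Real.exp ⟪ϑ, c i⟫ - 1)))
    (S : EuclideanSpace ℝ (Fin d)) (hS : S = ∑ i, (x i - p i) • c i) :
    ∀ θ : EuclideanSpace ℝ (Fin d), ‖θ‖ = 1 → ∀ ε : ℝ, 0 < ε →
      u (ε • θ) ≥ ε * ⟪θ, S⟫
        - ε ^ 2 / 2 * (∑ i, p i * (1 - p i) * ⟪θ, c i⟫ ^ 2) * Real.exp (ε * L) :=
  log_capital_lower_bound_general p x c hp L hL u hu S hS
end

section
/- Let V_n = Σ_{i=1}^n c_i c_i' p_i(1-p_i) be positive definite and ψ(θ) = Σ_{i=1}^n log(1+p_i(e^{θ'c_i}-1)). Then the Hessian H_ψ(θ) satisfies, for all θ with ‖θ‖ ≤ r and L = max_i ‖c_i‖: e^{-rL} V_n ≼ H_ψ(θ) ≼ e^{rL} V_n in the Loewner order. -/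
/-!
The `i`-th rank-one summand of `H_ψ(θ)` is that of `V_n` scaled by `eʸ / (1 + pᵢ (eʸ - 1))²` with
`y = ⟪θ, cᵢ⟫`, and this factor lies in `[e^{-|y|}, e^{|y|}] ⊆ [e^{-rL}, e^{rL}]` because
`|y| ≤ ‖θ‖ ‖cᵢ‖ ≤ rL`. Termwise scalar inequalities between coefficients of the same rank-one
matrices `cᵢ cᵢᵀ` give the Loewner inequalities between the sums.
-/

open Real RealInnerProductSpace Finset

theorem Matrix.posSemidef_sum_smul_vecMulVec_sub {ι m R : Type*} [Fintype ι] [Fintype m]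
    [CommRing R] [PartialOrder R] [StarRing R] [StarOrderedRing R] [TrivialStar R]
    {a b : ι → R} (hab : ∀ i, a i ≤ b i) (v : ι → m → R) :
    (∑ i, b i • vecMulVec (v i) (v i) - ∑ i, a i • vecMulVec (v i) (v i)).PosSemidef := by
  rw [← sum_sub_distrib]
  refine posSemidef_sum _ fun i _ => ?_
  rw [← sub_smul]
  simpa using (posSemidef_vecMulVec_self_star (v i)).smul (sub_nonneg.2 (hab i))

/-- `1 + p (eʸ - 1)` lies between `1` and `eʸ`, so dividing `eʸ` by its square lands between
`eʸ / e²ʸ = e⁻ʸ` and `eʸ`. -/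
theorem exp_div_sq_one_add_mul_exp_sub_one_mem_Icc {p : ℝ} (hp : p ∈ Set.Icc 0 1) (y : ℝ) :
    exp y / (1 + p * (exp y - 1)) ^ 2 ∈ Set.Icc (exp (-|y|)) (exp |y|) := by
  obtain ⟨hp0, hp1⟩ := hp
  have hexp_sq : exp y / exp y ^ 2 = exp (-y) := by
    rw [sq, div_mul_cancel_left₀ (exp_pos y).ne', exp_neg]
  rcases le_total 0 y with hy | hy
  · have h1 : 1 ≤ exp y := one_le_exp hy
    have hq1 : 1 ≤ 1 + p * (exp y - 1) := by nlinarith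
    have hqe : 1 + p * (exp y - 1) ≤ exp y := by nlinarith
    rw [abs_of_nonneg hy]
    constructor
    · calc exp (-y) = exp y / exp y ^ 2 := hexp_sq.symm
        _ ≤ exp y / (1 + p * (exp y - 1)) ^ 2 := by gcongr
    · calc exp y / (1 + p * (exp y - 1)) ^ 2 ≤ exp y / 1 ^ 2 := by gcongr
        _ = exp y := by simp
  · have h1 : exp y ≤ 1 := exp_le_one_iff.2 hy
    have hq1 : 1 + p * (exp y - 1) ≤ 1 := by nlinarith
    have hqe : exp y ≤ 1 + p * (exp y - 1) := by nlinarith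
    rw [abs_of_nonpos hy, neg_neg]
    constructor
    · calc exp y = exp y / 1 ^ 2 := by simp
        _ ≤ exp y / (1 + p * (exp y - 1)) ^ 2 := by
          have hq0 : 0 < 1 + p * (exp y - 1) := (exp_pos y).trans_le hqe
          gcongr
    · calc exp y / (1 + p * (exp y - 1)) ^ 2 ≤ exp y / exp y ^ 2 := by gcongr
        _ = exp (-y) := hexp_sq

theorem hessian_loewner_bounds_general {d n : ℕ}
    (p : Fin n → ℝ) (c : Fin n → EuclideanSpace ℝ (Fin d))
    (hp : ∀ i, p i ∈ Set.Ioo (0:ℝ) 1)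
    (V : Matrix (Fin d) (Fin d) ℝ)
    (hV : V = ∑ i, (p i * (1 - p i)) •
      Matrix.vecMulVec (fun j => c i j) (fun j => c i j))
    (H : EuclideanSpace ℝ (Fin d) → Matrix (Fin d) (Fin d) ℝ)
    (hH : ∀ θ, H θ = ∑ i,
      (p i * (1 - p i) * Real.exp ⟪θ, c i⟫
        / (1 + p i * (Real.exp ⟪θ, c i⟫ - 1)) ^ 2) •
      Matrix.vecMulVec (fun j => c i j) (fun j => c i j))
    (L : ℝ) (hL : IsGreatest (Set.range fun i => ‖c i‖) L)
    (r : ℝ) :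
    ∀ θ : EuclideanSpace ℝ (Fin d), ‖θ‖ ≤ r →
      (H θ - Real.exp (-(r * L)) • V).PosSemidef ∧
      (Real.exp (r * L) • V - H θ).PosSemidef := by
  intro θ hθ
  have hinner : ∀ i, |⟪θ, c i⟫| ≤ r * L := fun i =>
    (abs_real_inner_le_norm θ (c i)).trans
      (mul_le_mul hθ (hL.2 ⟨i, rfl⟩) (norm_nonneg _) ((norm_nonneg θ).trans hθ))
  have hweight := fun i =>
    exp_div_sq_one_add_mul_exp_sub_one_mem_Icc (Set.Ioo_subset_Icc_self (hp i)) ⟪θ, c i⟫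
  have hvar : ∀ i, 0 ≤ p i * (1 - p i) := fun i =>
    mul_nonneg (hp i).1.le (sub_nonneg.2 (hp i).2.le)
  rw [hH, hV, smul_sum, smul_sum]
  simp_rw [smul_smul, mul_div_assoc, mul_comm (p _ * (1 - p _))]
  constructor <;> refine Matrix.posSemidef_sum_smul_vecMulVec_sub (fun i => ?_) _
  · exact mul_le_mul_of_nonneg_right
      ((exp_le_exp.2 (neg_le_neg (hinner i))).trans (hweight i).1) (hvar i)
  · exact mul_le_mul_of_nonneg_right
      ((hweight i).2.trans (exp_le_exp.2 (hinner i))) (hvar i)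

/-- Loewner bounds on the Hessian of `ψ`:
`e^{-rL} V_n ≼ H_ψ(θ) ≼ e^{rL} V_n` for `‖θ‖ ≤ r`. -/
theorem hessian_loewner_bounds {d n : ℕ}
    (p : Fin n → ℝ) (c : Fin n → EuclideanSpace ℝ (Fin d))
    (hp : ∀ i, p i ∈ Set.Ioo (0:ℝ) 1)
    (V : Matrix (Fin d) (Fin d) ℝ)
    (hV : V = ∑ i, (p i * (1 - p i)) •
      Matrix.vecMulVec (fun j => c i j) (fun j => c i j))
    (hVpd : V.PosDef)
    (H : EuclideanSpace ℝ (Fin d) → Matrix (Fin d) (Fin d) ℝ)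
    (hH : ∀ θ, H θ = ∑ i,
      (p i * (1 - p i) * Real.exp ⟪θ, c i⟫
        / (1 + p i * (Real.exp ⟪θ, c i⟫ - 1)) ^ 2) •
      Matrix.vecMulVec (fun j => c i j) (fun j => c i j))
    (L : ℝ) (hL : IsGreatest (Set.range fun i => ‖c i‖) L)
    (r : ℝ) (hr : 0 ≤ r) :
    ∀ θ : EuclideanSpace ℝ (Fin d), ‖θ‖ ≤ r →
      (H θ - Real.exp (-(r * L)) • V).PosSemidef ∧
      (Real.exp (r * L) • V - H θ).PosSemidef :=
  hessian_loewner_bounds_general p c hp V hV H hH L hL r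
end

section
/- Let p_i ∈ (0,1), x_i ∈ {0,1}, c_i ∈ ℝ^d, S_n = Σ c_i(x_i - p_i), V_n = Σ c_i c_i' p_i(1-p_i) with smallest eigenvalue λ_min > 0 and largest eigenvalue λ_max. Set L_c = max_i ‖c_i‖ and L_λ = λ_max/λ_min. Let u(θ) = log K_n^θ (the log-likelihood ratio of the logistic strategy). If ‖V_n^{-1}S_n‖ ≤ 1/(3 L_c L_λ), then any maximizer θ̂ of u satisfies ‖θ̂‖ ≤ 3 L_λ ‖V_n^{-1}S_n‖. -/
/-!
Along the ray `s ↦ s • θ̂` the log-capital is concave, and with `aᵢ = ⟪θ̂, cᵢ⟫` its slope is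
`∑ (xᵢ - pᵢ) aᵢ - ∑ aᵢ (γ_{pᵢ}(s aᵢ) - pᵢ)`, where `γ_p(t) = p eᵗ / (1 - p + p eᵗ)`.
The elementary bound `t (γ_p(t) - p) ≥ p (1 - p) t² e^{-|t|}` and `λ_min ≤ V ≤ λ_max` give
`slope(s) ≤ λ_max ‖θ̂‖ ‖V⁻¹S‖ - s e^{-s ‖θ̂‖ L_c} λ_min ‖θ̂‖²`, which is negative at
`s ‖θ̂‖ = 3 L_λ ‖V⁻¹S‖` because `3 e⁻¹ > 1`. So if `‖θ̂‖` were larger, the log-capital would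
strictly decrease on `[s, 1]` along the ray, contradicting the maximality of `θ̂`.
-/

open Real RealInnerProductSpace Finset Matrix

/-- The mean of a Bernoulli(`p`) variable `X` reweighted by `e^{tX}`. -/
noncomputable def tiltedMean (p t : ℝ) : ℝ := p * exp t / (1 - p + p * exp t)

section TiltedMean

variable {p : ℝ}

lemma one_sub_add_mul_exp_pos (hp0 : 0 ≤ p) (hp1 : p ≤ 1) (t : ℝ) : 0 < 1 - p + p * exp t := by
  rcases hp0.eq_or_lt with rfl | hp
  · simp
  · linarith [mul_pos hp (exp_pos t)]

lemma hasDerivAt_log_one_add_mul_exp_sub_one (hp0 : 0 ≤ p) (hp1 : p ≤ 1) (t : ℝ) :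
    HasDerivAt (fun t => log (1 + p * (exp t - 1))) (tiltedMean p t) t := by
  have hden := one_sub_add_mul_exp_pos hp0 hp1 t
  have h := ((((hasDerivAt_exp t).sub_const 1).const_mul p).const_add 1).log (by linarith)
  convert h using 1
  rw [tiltedMean]
  congr 1
  ring

lemma monotone_tiltedMean (hp0 : 0 ≤ p) (hp1 : p ≤ 1) : Monotone (tiltedMean p) := by
  intro s t hst
  have hs := one_sub_add_mul_exp_pos hp0 hp1 s
  have ht := one_sub_add_mul_exp_pos hp0 hp1 t
  rw [tiltedMean, tiltedMean, div_le_div_iff₀ hs ht]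
  nlinarith [mul_nonneg (mul_nonneg hp0 (sub_nonneg.2 hp1)) (sub_nonneg.2 (exp_le_exp.2 hst))]

lemma mul_sq_mul_exp_neg_abs_le (hp0 : 0 ≤ p) (hp1 : p ≤ 1) (t : ℝ) :
    p * (1 - p) * (t ^ 2 * exp (-|t|)) ≤ t * (tiltedMean p t - p) := by
  have hden := one_sub_add_mul_exp_pos hp0 hp1 t
  have hmean : t * (tiltedMean p t - p) =
      p * (1 - p) * (t * (exp t - 1) / (1 - p + p * exp t)) := by
    rw [tiltedMean]; field_simp; ring
  rw [hmean]
  refine mul_le_mul_of_nonneg_left ?_ (mul_nonneg hp0 (sub_nonneg.2 hp1))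
  rw [le_div_iff₀ hden]
  have hinv : exp (-t) * exp t = 1 := by rw [← exp_add, neg_add_cancel, exp_zero]
  rcases le_or_gt 0 t with ht | ht
  · have hden_le : 1 - p + p * exp t ≤ exp t := by
      nlinarith [mul_nonneg (sub_nonneg.2 hp1) (sub_nonneg.2 (one_le_exp ht))]
    rw [abs_of_nonneg ht]
    calc t ^ 2 * exp (-t) * (1 - p + p * exp t) ≤ t ^ 2 * exp (-t) * exp t := by gcongr
      _ = t ^ 2 := by rw [mul_assoc, hinv, mul_one]
      _ ≤ t * (exp t - 1) := by nlinarith [add_one_le_exp t]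
  · have hden_le : 1 - p + p * exp t ≤ 1 := by
      nlinarith [exp_le_one_iff.2 ht.le]
    rw [abs_of_neg ht, neg_neg]
    calc t ^ 2 * exp t * (1 - p + p * exp t) ≤ t ^ 2 * exp t * 1 := by gcongr
      _ ≤ t * (exp t - 1) := by
        nlinarith [mul_le_mul_of_nonneg_left (add_one_le_exp (-t)) (exp_pos t).le]

end TiltedMean

lemma lt_of_hasDerivAt_of_antitone {f f' : ℝ → ℝ} (hf : ∀ s, HasDerivAt f (f' s) s)
    (hf' : Antitone f') {a b : ℝ} (hab : a < b) (ha : f' a < 0) : f b < f a := by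
  refine strictAntiOn_of_deriv_neg (convex_Icc a b)
    (fun s _ => (hf s).continuousAt.continuousWithinAt) (fun s hs => ?_)
    (Set.left_mem_Icc.2 hab.le) (Set.right_mem_Icc.2 hab.le) hab
  rw [interior_Icc] at hs
  rw [(hf s).deriv]
  exact (hf' hs.1.le).trans_lt ha

section LogCapital

variable {ι E : Type*} [Fintype ι] [NormedAddCommGroup E] [InnerProductSpace ℝ E]
  {p : ι → ℝ} {x : ι → ℝ} {c : ι → E}

noncomputable def logCapital (p x : ι → ℝ) (c : ι → E) (θ : E) : ℝ :=
  ⟪θ, ∑ i, x i • c i⟫ - ∑ i, log (1 + p i * (exp ⟪θ, c i⟫ - 1))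

noncomputable def radialSlope (p x : ι → ℝ) (c : ι → E) (θ : E) (s : ℝ) : ℝ :=
  ∑ i, ⟪θ, c i⟫ * (x i - tiltedMean (p i) (s * ⟪θ, c i⟫))

lemma hasDerivAt_logCapital_smul (hp : ∀ i, p i ∈ Set.Icc (0 : ℝ) 1) (θ : E) (s : ℝ) :
    HasDerivAt (fun s : ℝ => logCapital p x c (s • θ)) (radialSlope p x c θ s) s := by
  have hlog : ∀ i, HasDerivAt (fun s : ℝ => log (1 + p i * (exp (s * ⟪θ, c i⟫) - 1)))
      (tiltedMean (p i) (s * ⟪θ, c i⟫) * ⟪θ, c i⟫) s := fun i =>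
    (hasDerivAt_log_one_add_mul_exp_sub_one (hp i).1 (hp i).2 _).comp s
      (hasDerivAt_mul_const _)
  have hfun : (fun s : ℝ => logCapital p x c (s • θ)) =
      fun s => s * ⟪θ, ∑ i, x i • c i⟫ - ∑ i, log (1 + p i * (exp (s * ⟪θ, c i⟫) - 1)) := by
    funext s
    simp only [logCapital, real_inner_smul_left]
  rw [hfun]
  refine ((hasDerivAt_mul_const _).sub (HasDerivAt.fun_sum fun i _ => hlog i)).congr_deriv ?_
  simp only [radialSlope, inner_sum, real_inner_smul_right, mul_sub, sum_sub_distrib]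
  congr 1 <;> exact sum_congr rfl fun i _ => by ring

lemma antitone_radialSlope (hp : ∀ i, p i ∈ Set.Icc (0 : ℝ) 1) (θ : E) :
    Antitone (radialSlope p x c θ) := by
  intro s t hst
  refine sum_le_sum fun i _ => ?_
  have hmono := monotone_tiltedMean (hp i).1 (hp i).2
  rcases le_total 0 ⟪θ, c i⟫ with ha | ha
  · nlinarith [hmono (mul_le_mul_of_nonneg_right hst ha)]
  · nlinarith [hmono (mul_le_mul_of_nonpos_right hst ha)]

lemma logCapital_lt_smul_of_radialSlope_neg (hp : ∀ i, p i ∈ Set.Icc (0 : ℝ) 1) {θ : E}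
    {s : ℝ} (hs : s < 1) (hneg : radialSlope p x c θ s < 0) :
    logCapital p x c θ < logCapital p x c (s • θ) := by
  simpa using lt_of_hasDerivAt_of_antitone (hasDerivAt_logCapital_smul hp θ)
    (antitone_radialSlope hp θ) hs hneg

lemma radialSlope_le (hp : ∀ i, p i ∈ Set.Icc (0 : ℝ) 1) {L : ℝ} (hc : ∀ i, ‖c i‖ ≤ L)
    (θ : E) {s : ℝ} (hs : 0 < s) :
    radialSlope p x c θ s ≤ ∑ i, (x i - p i) * ⟪θ, c i⟫
      - s * exp (-(s * ‖θ‖ * L)) * ∑ i, p i * (1 - p i) * ⟪θ, c i⟫ ^ 2 := by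
  have hsplit : radialSlope p x c θ s = ∑ i, (x i - p i) * ⟪θ, c i⟫
      - ∑ i, ⟪θ, c i⟫ * (tiltedMean (p i) (s * ⟪θ, c i⟫) - p i) := by
    rw [radialSlope, ← sum_sub_distrib]
    exact sum_congr rfl fun i _ => by ring
  rw [hsplit, mul_sum]
  refine sub_le_sub_left (sum_le_sum fun i _ => ?_) _
  set a := ⟪θ, c i⟫
  have habs : |s * a| ≤ s * ‖θ‖ * L := by
    rw [abs_mul, abs_of_pos hs, mul_assoc]
    exact mul_le_mul_of_nonneg_left
      ((abs_real_inner_le_norm θ (c i)).trans (mul_le_mul_of_nonneg_left (hc i) (norm_nonneg θ)))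
      hs.le
  have hexp : exp (-(s * ‖θ‖ * L)) ≤ exp (-|s * a|) := exp_le_exp.2 (neg_le_neg habs)
  have hpq : 0 ≤ p i * (1 - p i) := mul_nonneg (hp i).1 (sub_nonneg.2 (hp i).2)
  rw [← mul_le_mul_iff_right₀ hs]
  calc s * (s * exp (-(s * ‖θ‖ * L)) * (p i * (1 - p i) * a ^ 2))
      = p i * (1 - p i) * ((s * a) ^ 2 * exp (-(s * ‖θ‖ * L))) := by ring
    _ ≤ p i * (1 - p i) * ((s * a) ^ 2 * exp (-|s * a|)) := by gcongr
    _ ≤ s * a * (tiltedMean (p i) (s * a) - p i) := mul_sq_mul_exp_neg_abs_le (hp i).1 (hp i).2 _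
    _ = s * (a * (tiltedMean (p i) (s * a) - p i)) := by ring

end LogCapital

namespace LinearMap.IsSymmetric

variable {E : Type*} [NormedAddCommGroup E] [InnerProductSpace ℝ E] [FiniteDimensional ℝ E]
  {T : E →ₗ[ℝ] E}

lemma inner_eigenvectorBasis_apply (hT : T.IsSymmetric) (i : Fin (Module.finrank ℝ E)) (y : E) :
    ⟪hT.eigenvectorBasis rfl i, T y⟫ = hT.eigenvalues rfl i * ⟪hT.eigenvectorBasis rfl i, y⟫ := by
  rw [← hT, hT.apply_eigenvectorBasis, real_inner_smul_left]
  rfl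

lemma mul_norm_sq_le_inner_apply_self (hT : T.IsSymmetric) {m : ℝ}
    (hm : m ∈ lowerBounds (spectrum ℝ T)) (y : E) : m * ‖y‖ ^ 2 ≤ ⟪y, T y⟫ := by
  set b := hT.eigenvectorBasis rfl
  calc m * ‖y‖ ^ 2 = ∑ i, m * ⟪b i, y⟫ ^ 2 := by rw [← b.sum_sq_inner_right, mul_sum]
    _ ≤ ∑ i, hT.eigenvalues rfl i * ⟪b i, y⟫ ^ 2 := by
      gcongr with i
      exact hm (hT.hasEigenvalue_eigenvalues rfl i).mem_spectrum
    _ = ⟪y, T y⟫ := by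
      rw [← b.sum_inner_mul_inner]
      refine sum_congr rfl fun i _ => ?_
      rw [hT.inner_eigenvectorBasis_apply, real_inner_comm]
      ring

lemma norm_apply_le (hT : T.IsSymmetric) {M : ℝ} (hM0 : 0 ≤ M)
    (hM : ∀ μ ∈ spectrum ℝ T, |μ| ≤ M) (y : E) : ‖T y‖ ≤ M * ‖y‖ := by
  set b := hT.eigenvectorBasis rfl
  refine le_of_sq_le_sq ?_ (by positivity)
  calc ‖T y‖ ^ 2 = ∑ i, hT.eigenvalues rfl i ^ 2 * ⟪b i, y⟫ ^ 2 := by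
        rw [← b.sum_sq_inner_right]
        exact sum_congr rfl fun i _ => by rw [hT.inner_eigenvectorBasis_apply]; ring
    _ ≤ ∑ i, M ^ 2 * ⟪b i, y⟫ ^ 2 := by
      refine sum_le_sum fun i _ => mul_le_mul_of_nonneg_right ?_ (sq_nonneg _)
      exact sq_le_sq.2 ((hM _ (hT.hasEigenvalue_eigenvalues rfl i).mem_spectrum).trans
        (le_abs_self M))
    _ = (M * ‖y‖) ^ 2 := by rw [← mul_sum, b.sum_sq_inner_right, mul_pow]

lemma inner_apply_le (hT : T.IsSymmetric) {M : ℝ} (hM0 : 0 ≤ M)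
    (hM : ∀ μ ∈ spectrum ℝ T, |μ| ≤ M) (x y : E) : ⟪x, T y⟫ ≤ M * ‖x‖ * ‖y‖ :=
  (real_inner_le_norm _ _).trans <|
    (mul_le_mul_of_nonneg_left (hT.norm_apply_le hM0 hM y) (norm_nonneg x)).trans_eq (by ring)

end LinearMap.IsSymmetric

lemma toEuclideanLin_sum_smul_vecMulVec {ι κ : Type*} [Fintype ι] [Fintype κ] [DecidableEq κ]
    (w : ι → ℝ) (c : ι → EuclideanSpace ℝ κ) (y : EuclideanSpace ℝ κ) :
    toEuclideanLin (∑ i, w i • vecMulVec (fun j => c i j) (fun j => c i j)) y =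
      ∑ i, (w i * ⟪c i, y⟫) • c i := by
  ext j
  simp only [map_sum, map_smul, LinearMap.coe_sum, LinearMap.coe_smul, Finset.sum_apply,
    Pi.smul_apply, toLpLin_apply, WithLp.ofLp_sum, WithLp.ofLp_smul, mulVec, dotProduct,
    vecMulVec_apply, smul_eq_mul, mul_sum, PiLp.inner_apply, RCLike.inner_apply, ringHom_apply,
    sum_mul]
  exact sum_congr rfl fun i _ => sum_congr rfl fun k _ => by ring

lemma isSymmetric_toEuclideanLin_sum_smul_vecMulVec {ι κ : Type*} [Fintype ι] [Fintype κ]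
    [DecidableEq κ] (w : ι → ℝ) (c : ι → EuclideanSpace ℝ κ) :
    (toEuclideanLin (∑ i, w i • vecMulVec (fun j => c i j) (fun j => c i j))).IsSymmetric :=
  fun a b => by
    simp only [toEuclideanLin_sum_smul_vecMulVec, sum_inner, inner_sum, real_inner_smul_left,
      real_inner_smul_right]
    exact sum_congr rfl fun i _ => by rw [real_inner_comm a]; ring

lemma inner_toEuclideanLin_sum_smul_vecMulVec {ι κ : Type*} [Fintype ι] [Fintype κ]
    [DecidableEq κ] (w : ι → ℝ) (c : ι → EuclideanSpace ℝ κ) (θ : EuclideanSpace ℝ κ) :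
    ⟪θ, toEuclideanLin (∑ i, w i • vecMulVec (fun j => c i j) (fun j => c i j)) θ⟫ =
      ∑ i, w i * ⟪θ, c i⟫ ^ 2 := by
  simp only [toEuclideanLin_sum_smul_vecMulVec, inner_sum, real_inner_smul_right]
  exact sum_congr rfl fun i _ => by rw [real_inner_comm]; ring

lemma one_lt_three_mul_exp_neg_one : 1 < 3 * exp (-1) := by
  rw [exp_neg, ← div_eq_mul_inv, one_lt_div (exp_pos 1)]
  linarith [exp_one_lt_d9]

lemma norm_le_of_forall_logCapital_le {ι E : Type*} [Fintype ι] [NormedAddCommGroup E]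
    [InnerProductSpace ℝ E] {p x : ι → ℝ} {c : ι → E} (hp : ∀ i, p i ∈ Set.Icc (0 : ℝ) 1)
    {L lmin lmax r : ℝ} (hc : ∀ i, ‖c i‖ ≤ L) (hlmin : 0 < lmin) (hlmax : 0 < lmax)
    (hr : 0 ≤ r) (hsmall : 3 * (lmax / lmin) * r * L ≤ 1)
    (hfisher : ∀ θ : E, lmin * ‖θ‖ ^ 2 ≤ ∑ i, p i * (1 - p i) * ⟪θ, c i⟫ ^ 2)
    (hscore : ∀ θ : E, ∑ i, (x i - p i) * ⟪θ, c i⟫ ≤ lmax * ‖θ‖ * r)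
    {θ : E} (hmax : ∀ θ', logCapital p x c θ' ≤ logCapital p x c θ) :
    ‖θ‖ ≤ 3 * (lmax / lmin) * r := by
  by_contra! hbig
  have hθ : 0 < ‖θ‖ := (by positivity : (0 : ℝ) ≤ _).trans_lt hbig
  have hslope : ∀ s, 0 < s → radialSlope p x c θ s ≤
      lmax * ‖θ‖ * r - s * exp (-(s * ‖θ‖ * L)) * (lmin * ‖θ‖ ^ 2) := fun s hs =>
    (radialSlope_le hp hc θ hs).trans
      (sub_le_sub (hscore θ) (mul_le_mul_of_nonneg_left (hfisher θ) (by positivity)))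
  obtain ⟨s, hs1, hneg⟩ : ∃ s, s < 1 ∧ radialSlope p x c θ s < 0 := by
    rcases hr.eq_or_lt with rfl | hr
    · refine ⟨1 / 2, by norm_num, (hslope _ (by norm_num)).trans_lt ?_⟩
      have : 0 < 1 / 2 * exp (-(1 / 2 * ‖θ‖ * L)) * (lmin * ‖θ‖ ^ 2) := by positivity
      linarith
    · set s := 3 * (lmax / lmin) * r / ‖θ‖
      refine ⟨s, (div_lt_one hθ).2 hbig, (hslope s (by positivity)).trans_lt ?_⟩
      have hsθ : s * ‖θ‖ = 3 * (lmax / lmin) * r := div_mul_cancel₀ _ hθ.ne'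
      have hexp : exp (-1) ≤ exp (-(s * ‖θ‖ * L)) := exp_le_exp.2 (by rw [hsθ]; linarith)
      have hfis : s * (lmin * ‖θ‖ ^ 2) = 3 * lmax * r * ‖θ‖ := by
        rw [show s * (lmin * ‖θ‖ ^ 2) = s * ‖θ‖ * lmin * ‖θ‖ by ring, hsθ]
        field_simp
      have hpos : 0 < lmax * r * ‖θ‖ := by positivity
      calc lmax * ‖θ‖ * r - s * exp (-(s * ‖θ‖ * L)) * (lmin * ‖θ‖ ^ 2)
          = lmax * r * ‖θ‖ - 3 * (lmax * r * ‖θ‖) * exp (-(s * ‖θ‖ * L)) := by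
            linear_combination (-exp (-(s * ‖θ‖ * L))) * hfis
        _ ≤ lmax * r * ‖θ‖ - 3 * (lmax * r * ‖θ‖) * exp (-1) := by gcongr
        _ = lmax * r * ‖θ‖ * (1 - 3 * exp (-1)) := by ring
        _ < 0 := mul_neg_of_pos_of_neg hpos (by linarith [one_lt_three_mul_exp_neg_one])
  exact (logCapital_lt_smul_of_radialSlope_neg hp hs1 hneg).not_ge (hmax _)

theorem mle_bound_general {d n : ℕ}
    (p x : Fin n → ℝ) (c : Fin n → EuclideanSpace ℝ (Fin d))
    (hp : ∀ i, p i ∈ Set.Ioo (0:ℝ) 1)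
    (V : Matrix (Fin d) (Fin d) ℝ)
    (hV : V = ∑ i, (p i * (1 - p i)) •
      Matrix.vecMulVec (fun j => c i j) (fun j => c i j))
    (S : Fin d → ℝ) (hS : S = ∑ i, (x i - p i) • (fun j => c i j))
    (Lc : ℝ) (hLc : IsGreatest (Set.range fun i => ‖c i‖) Lc)
    (lmin lmax : ℝ)
    (hlmin : IsLeast (spectrum ℝ V) lmin)
    (hlmax : IsGreatest (spectrum ℝ V) lmax)
    (hlminpos : 0 < lmin)
    (u : EuclideanSpace ℝ (Fin d) → ℝ)
    (hu : ∀ θ, u θ = ⟪θ, ∑ i, x i • c i⟫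
        - ∑ i, Real.log (1 + p i * (Real.exp ⟪θ, c i⟫ - 1)))
    (hsmall : ‖(EuclideanSpace.equiv (Fin d) ℝ).symm (V⁻¹ *ᵥ S)‖
        ≤ 1 / (3 * Lc * (lmax / lmin))) :
    ∀ θhat : EuclideanSpace ℝ (Fin d), (∀ θ, u θ ≤ u θhat) →
      ‖θhat‖ ≤ 3 * (lmax / lmin)
        * ‖(EuclideanSpace.equiv (Fin d) ℝ).symm (V⁻¹ *ᵥ S)‖ := by
  intro θhat hmax
  obtain rfl : u = logCapital p x c := funext hu
  set w := (EuclideanSpace.equiv (Fin d) ℝ).symm (V⁻¹ *ᵥ S)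
  have hlmax_pos : 0 < lmax := hlminpos.trans_le (hlmax.2 hlmin.1)
  have hV_unit : IsUnit V :=
    spectrum.isUnit_of_zero_notMem ℝ fun h => (hlmin.2 h).not_gt hlminpos
  have hVw : toEuclideanLin V w = ∑ i, (x i - p i) • c i := by
    simp [w, hS, toLpLin_apply, mulVec_mulVec,
      mul_nonsing_inv V ((isUnit_iff_isUnit_det V).1 hV_unit)]
  have hsymm : (toEuclideanLin V).IsSymmetric :=
    hV ▸ isSymmetric_toEuclideanLin_sum_smul_vecMulVec _ c
  have hexponent : 3 * (lmax / lmin) * ‖w‖ * Lc ≤ 1 := by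
    rcases le_or_gt Lc 0 with hLc0 | hLc0
    · exact (mul_nonpos_of_nonneg_of_nonpos (by positivity) hLc0).trans zero_le_one
    · rw [le_div_iff₀ (by positivity)] at hsmall
      linarith
  rw [← spectrum_toLpLin 2] at hlmin hlmax
  refine norm_le_of_forall_logCapital_le (fun i => Set.Ioo_subset_Icc_self (hp i))
    (fun i => hLc.2 ⟨i, rfl⟩) hlminpos hlmax_pos (norm_nonneg w) hexponent
    (fun θ => ?_) (fun θ => ?_) hmax
  · exact (hsymm.mul_norm_sq_le_inner_apply_self hlmin.2 θ).trans_eq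
      (hV ▸ inner_toEuclideanLin_sum_smul_vecMulVec _ c θ)
  · calc ∑ i, (x i - p i) * ⟪θ, c i⟫ = ⟪θ, toEuclideanLin V w⟫ := by
          simp only [hVw, inner_sum, real_inner_smul_right]
      _ ≤ lmax * ‖θ‖ * ‖w‖ := hsymm.inner_apply_le hlmax_pos.le
          (fun μ hμ => abs_le.2 ⟨by linarith [hlmin.2 hμ], hlmax.2 hμ⟩) θ w

/-- Bound on the maximum likelihood estimate: if `‖V_n⁻¹S_n‖ ≤ 1/(3L_cL_λ)`
then any maximizer `θ̂` of the log-capital `u` satisfies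
`‖θ̂‖ ≤ 3L_λ‖V_n⁻¹S_n‖`. -/
theorem mle_bound {d n : ℕ} (hn : 0 < n)
    (p x : Fin n → ℝ) (c : Fin n → EuclideanSpace ℝ (Fin d))
    (hp : ∀ i, p i ∈ Set.Ioo (0:ℝ) 1)
    (hx : ∀ i, x i = 0 ∨ x i = 1)
    (V : Matrix (Fin d) (Fin d) ℝ)
    (hV : V = ∑ i, (p i * (1 - p i)) •
      Matrix.vecMulVec (fun j => c i j) (fun j => c i j))
    (S : Fin d → ℝ) (hS : S = ∑ i, (x i - p i) • (fun j => c i j))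
    (Lc : ℝ) (hLc : IsGreatest (Set.range fun i => ‖c i‖) Lc)
    (lmin lmax : ℝ)
    (hlmin : IsLeast (spectrum ℝ V) lmin)
    (hlmax : IsGreatest (spectrum ℝ V) lmax)
    (hlminpos : 0 < lmin)
    (u : EuclideanSpace ℝ (Fin d) → ℝ)
    (hu : ∀ θ, u θ = ⟪θ, ∑ i, x i • c i⟫
        - ∑ i, Real.log (1 + p i * (Real.exp ⟪θ, c i⟫ - 1)))
    (hsmall : ‖(EuclideanSpace.equiv (Fin d) ℝ).symm (V⁻¹ *ᵥ S)‖
        ≤ 1 / (3 * Lc * (lmax / lmin))) :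
    ∀ θhat : EuclideanSpace ℝ (Fin d), (∀ θ, u θ ≤ u θhat) →
      ‖θhat‖ ≤ 3 * (lmax / lmin)
        * ‖(EuclideanSpace.equiv (Fin d) ℝ).symm (V⁻¹ *ᵥ S)‖ :=
  mle_bound_general p x c hp V hV S hS Lc hLc lmin lmax hlmin hlmax hlminpos u hu hsmall
end

section
/- Fix β ≤ 1 and τ ∈ ℝ. Define for p ∈ (0,1): ν(p) = (p^{β-1}e^τ − (1-p)^{β-1})/(p^β e^τ + (1-p)^β). Then ν is monotone non-increasing in p on (0,1). -/
/-!
Write `r = e^τ (p/(1-p))^{β-1}` for the factor by which the logistic model multiplies the odds of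
`p`. Dividing numerator and denominator by `(1-p)^{β-1}` gives `ν(p) = (r - 1)/(p r + 1 - p)`.
This expression is non-increasing in `p` for fixed `r > 0` and non-decreasing in `r`, while
`r` itself is non-increasing in `p` because `β - 1 ≤ 0`; so both effects push `ν` down as `p` grows.
-/

open Real

/-- The betting ratio `(p̂ - p)/(p(1 - p))` expressed through `p` and the odds ratio
`r = (p̂/(1 - p̂)) / (p/(1 - p))`. -/
noncomputable def bettingRatio (p r : ℝ) : ℝ := (r - 1) / (p * r + (1 - p))

lemma bettingRatio_denom_pos {p r : ℝ} (hp : p ∈ Set.Icc (0 : ℝ) 1) (hr : 0 < r) :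
    0 < p * r + (1 - p) := by
  rcases hp.1.eq_or_lt with rfl | hp₀
  · simp
  · nlinarith [mul_pos hp₀ hr, hp.2]

lemma bettingRatio_antitone_left {p q r : ℝ} (hp : p ∈ Set.Icc (0 : ℝ) 1)
    (hq : q ∈ Set.Icc (0 : ℝ) 1) (hpq : p ≤ q) (hr : 0 < r) :
    bettingRatio q r ≤ bettingRatio p r := by
  rw [bettingRatio, bettingRatio, div_le_div_iff₀ (bettingRatio_denom_pos hq hr)
    (bettingRatio_denom_pos hp hr)]
  nlinarith [mul_nonneg (sub_nonneg.2 hpq) (sq_nonneg (r - 1))]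

lemma bettingRatio_monotone_right {p r r' : ℝ} (hp : p ∈ Set.Icc (0 : ℝ) 1) (hr : 0 < r)
    (hrr' : r ≤ r') : bettingRatio p r ≤ bettingRatio p r' := by
  rw [bettingRatio, bettingRatio, div_le_div_iff₀ (bettingRatio_denom_pos hp hr)
    (bettingRatio_denom_pos hp (hr.trans_le hrr'))]
  linarith

lemma antitoneOn_odds_rpow {γ : ℝ} (hγ : γ ≤ 0) :
    AntitoneOn (fun p : ℝ => (p / (1 - p)) ^ γ) (Set.Ioo 0 1) := by
  intro p hp q hq hpq
  have hp' : 0 < 1 - p := sub_pos.2 hp.2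
  have hq' : 0 < 1 - q := sub_pos.2 hq.2
  refine rpow_le_rpow_of_nonpos (div_pos hp.1 hp') ?_ hγ
  rw [div_le_div_iff₀ hp' hq']
  nlinarith

lemma logistic_betting_ratio_eq (β τ : ℝ) {p : ℝ} (hp : p ∈ Set.Ioo (0 : ℝ) 1) :
    (p ^ (β - 1) * exp τ - (1 - p) ^ (β - 1)) / (p ^ β * exp τ + (1 - p) ^ β)
      = bettingRatio p (exp τ * (p / (1 - p)) ^ (β - 1)) := by
  have hp' : 0 < 1 - p := sub_pos.2 hp.2
  have hb : 0 < (1 - p) ^ (β - 1) := rpow_pos_of_pos hp' _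
  have hpβ : p ^ β = p ^ (β - 1) * p := by rw [rpow_sub_one hp.1.ne', div_mul_cancel₀ _ hp.1.ne']
  have hqβ : (1 - p) ^ β = (1 - p) ^ (β - 1) * (1 - p) := by
    rw [rpow_sub_one hp'.ne', div_mul_cancel₀ _ hp'.ne']
  rw [bettingRatio, div_rpow hp.1.le hp'.le, hpβ, hqβ]
  field_simp

/-- For `β ≤ 1`, the betting ratio
`ν(p) = (p^{β-1}e^τ − (1-p)^{β-1})/(p^β e^τ + (1-p)^β)` is monotone
non-increasing on `(0,1)`. -/
theorem betting_ratio_antitone (β τ : ℝ) (hβ : β ≤ 1) :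
    AntitoneOn
      (fun p : ℝ =>
        (p ^ (β - 1) * Real.exp τ - (1 - p) ^ (β - 1))
          / (p ^ β * Real.exp τ + (1 - p) ^ β))
      (Set.Ioo (0:ℝ) 1) := by
  intro p hp q hq hpq
  simp only [logistic_betting_ratio_eq β τ hp, logistic_betting_ratio_eq β τ hq]
  have hr_pos : 0 < exp τ * (q / (1 - q)) ^ (β - 1) :=
    mul_pos (exp_pos τ) (rpow_pos_of_pos (div_pos hq.1 (sub_pos.2 hq.2)) _)
  have hr_le : exp τ * (q / (1 - q)) ^ (β - 1) ≤ exp τ * (p / (1 - p)) ^ (β - 1) :=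
    mul_le_mul_of_nonneg_left (antitoneOn_odds_rpow (by linarith) hp hq hpq) (exp_pos τ).le
  calc bettingRatio q (exp τ * (q / (1 - q)) ^ (β - 1))
      ≤ bettingRatio q (exp τ * (p / (1 - p)) ^ (β - 1)) :=
        bettingRatio_monotone_right (Set.Ioo_subset_Icc_self hq) hr_pos hr_le
    _ ≤ bettingRatio p (exp τ * (p / (1 - p)) ^ (β - 1)) :=
        bettingRatio_antitone_left (Set.Ioo_subset_Icc_self hp) (Set.Ioo_subset_Icc_self hq) hpq
          (hr_pos.trans_le hr_le)
end
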